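/- Let U ⊆ ℝ², let μ > 0, let E be a normed additive group, and let K : ℤ² × ℤ² → E satisfy ‖K(x,y)‖ ≤ μ⁻¹ exp(−μ‖x−y‖) for all x, y ∈ ℤ². Let χ_U : ℝ² → ℝ denote the indicator function of U. Then for all x, y ∈ ℤ²: |χ_U(x) − χ_U(y)| · ‖K(x,y)‖ ≤ μ⁻¹ exp(−(μ/3)(‖x−y‖ + d(x, ∂U) + d(y, ∂U))). (This is the kernel estimate for the commutator [A, Λ_U] of an operator A with exponentially decaying kernel K and the multiplication operator Λ_U by χ_U, whose kernel at (x,y) is (χ_U(y) − χ_U(x))·K(x,y).) -/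

import Mathlib

open Metric Set

noncomputable section

/-- The canonical embedding of `ℤ²` into the Euclidean plane. -/
def emb (p : ℤ × ℤ) : EuclideanSpace ℝ (Fin 2) :=
  (WithLp.equiv 2 (Fin 2 → ℝ)).symm ![(p.1 : ℝ), (p.2 : ℝ)]

/-!
A jump of `χ_U` between `x` and `y` forces the segment `[x, y]` to cross `∂U`, so both
`d(x, ∂U)` and `d(y, ∂U)` are at most `‖x - y‖`. Hence the exponent `μ‖x - y‖` of the kernel bound
dominates `(μ/3)(‖x - y‖ + d(x, ∂U) + d(y, ∂U))`; where `χ_U` does not jump the left side vanishes.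
-/

theorem IsPreconnected.inter_frontier_nonempty {X : Type*} [TopologicalSpace X] {t s : Set X}
    (ht : IsPreconnected t) (hts : (t ∩ s).Nonempty) (hts' : (t \ s).Nonempty) :
    (t ∩ frontier s).Nonempty := by
  by_contra h
  have hcover : t ⊆ interior s ∪ (closure s)ᶜ := fun p hp => by
    by_contra hp'
    simp only [mem_union, mem_compl_iff, not_or, not_not] at hp'
    exact h ⟨p, hp, hp'.2, hp'.1⟩
  obtain ⟨a, hat, has⟩ := hts
  have ha : a ∈ interior s :=
    (hcover hat).resolve_right (not_not.mpr (subset_closure has))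
  have hts_int : t ⊆ interior s :=
    ht.subset_left_of_subset_union isOpen_interior isClosed_closure.isOpen_compl
      (disjoint_compl_right.mono_left interior_subset_closure) hcover ⟨a, hat, ha⟩
  obtain ⟨b, hbt, hbs⟩ := hts'
  exact hbs (interior_subset (hts_int hbt))

section NormedSpace

variable {V : Type*} [NormedAddCommGroup V] [NormedSpace ℝ V] {s : Set V} {a b : V}

theorem infDist_frontier_le_dist_of_mem_of_notMem (ha : a ∈ s) (hb : b ∉ s) :
    infDist a (frontier s) ≤ dist a b := by
  obtain ⟨z, hz, hzs⟩ := (convex_segment a b).isPreconnected.inter_frontier_nonempty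
    ⟨a, left_mem_segment ℝ a b, ha⟩ ⟨b, right_mem_segment ℝ a b, hb⟩
  calc infDist a (frontier s) ≤ dist a z := infDist_le_dist_of_mem hzs
    _ ≤ dist a b := by linarith [dist_add_dist_of_mem_segment hz, dist_nonneg (x := z) (y := b)]

theorem infDist_frontier_add_infDist_frontier_le (h : ¬(a ∈ s ↔ b ∈ s)) :
    infDist a (frontier s) + infDist b (frontier s) ≤ 2 * dist a b := by
  wlog ha : a ∈ s generalizing s
  · simpa only [frontier_compl] using this (s := sᶜ) (by simpa only [mem_compl_iff, not_iff_not])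
      ha
  have hb : b ∉ s := fun hb => h ⟨fun _ => hb, fun _ => ha⟩
  have hb' : infDist b (frontier s) ≤ dist a b := by
    simpa only [frontier_compl, dist_comm b] using
      infDist_frontier_le_dist_of_mem_of_notMem (s := sᶜ) hb (not_not.mpr ha)
  linarith [infDist_frontier_le_dist_of_mem_of_notMem ha hb]

end NormedSpace

theorem commutator_kernel_estimate (U : Set (EuclideanSpace ℝ (Fin 2)))
    (μ : ℝ) (hμ : 0 < μ) {E : Type*} [NormedAddGroup E]
    (K : ℤ × ℤ → ℤ × ℤ → E)
    (hK : ∀ x y : ℤ × ℤ, ‖K x y‖ ≤ μ⁻¹ * Real.exp (-μ * ‖emb x - emb y‖))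
    (x y : ℤ × ℤ) :
    |indicator U (fun _ => (1 : ℝ)) (emb x) - indicator U (fun _ => (1 : ℝ)) (emb y)|
        * ‖K x y‖ ≤
      μ⁻¹ * Real.exp (-(μ / 3) * (‖emb x - emb y‖
        + infDist (emb x) (frontier U) + infDist (emb y) (frontier U))) := by
  by_cases h : emb x ∈ U ↔ emb y ∈ U
  · have hχ : indicator U (fun _ => (1 : ℝ)) (emb x) = indicator U (fun _ => (1 : ℝ)) (emb y) := by
      by_cases hx : emb x ∈ U <;> simp [hx, ← h]
    rw [hχ, sub_self, abs_zero, zero_mul]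
    positivity
  · have hχ : |indicator U (fun _ => (1 : ℝ)) (emb x) - indicator U (fun _ => (1 : ℝ)) (emb y)|
        ≤ 1 := by
      by_cases hx : emb x ∈ U <;> simp_all
    have hd := infDist_frontier_add_infDist_frontier_le h
    rw [dist_eq_norm] at hd
    calc _ ≤ 1 * ‖K x y‖ := by gcongr
      _ ≤ μ⁻¹ * Real.exp (-μ * ‖emb x - emb y‖) := (one_mul _).trans_le (hK x y)
      _ ≤ _ := by gcongr μ⁻¹ * Real.exp ?_; nlinarith
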